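/- arXiv:2308.01754 — 5 statements merged into one kernel-verified Lean document; each statement's English description precedes it below -/
import Mathlib

section
/- For 0 < u < 1 and d1 > 0, let ψ(u) = √2((1 + d1) log(1 - u) - d1 log(u)). Then ψ is strictly decreasing, ψ(u) → +∞ as u → 0⁺, ψ(u) → -∞ as u → 1⁻, and its inverse U = ψ⁻¹ satisfies the ODE U'(x) = -U(x)(1 - U(x)) / (√2 (d1 + U(x))) for all x ∈ ℝ. -/
open Real Filter Set Topology

/-- For d1 > 0, ψ(u) = √2((1+d1)log(1-u) - d1 log u) is strictly decreasing on (0,1),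
tends to +∞ as u → 0⁺ and to -∞ as u → 1⁻, and its inverse U satisfies
U'(x) = -U(1-U)/(√2(d1+U)). -/
theorem stmt_4 (d1 : ℝ) (hd1 : 0 < d1) (ψ : ℝ → ℝ)
    (hψ : ∀ u, ψ u = Real.sqrt 2 * ((1 + d1) * Real.log (1 - u) - d1 * Real.log u)) :
    StrictAntiOn ψ (Set.Ioo 0 1) ∧
    Filter.Tendsto ψ (nhdsWithin 0 (Set.Ioi 0)) Filter.atTop ∧
    Filter.Tendsto ψ (nhdsWithin 1 (Set.Iio 1)) Filter.atBot ∧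
    ∀ U : ℝ → ℝ, (∀ x, U x ∈ Set.Ioo (0:ℝ) 1) → (∀ x, ψ (U x) = x) →
      ∀ x, HasDerivAt U (-(U x * (1 - U x)) / (Real.sqrt 2 * (d1 + U x))) x := by
  have h2 : (0:ℝ) < Real.sqrt 2 := Real.sqrt_pos.2 (by norm_num)
  have hanti : StrictAntiOn ψ (Set.Ioo 0 1) := by
    intro a ha b hb hab
    rw [hψ a, hψ b]
    have h1 : Real.log (1 - b) < Real.log (1 - a) :=
      Real.log_lt_log (by linarith [hb.2]) (by linarith)
    have h2' : Real.log a < Real.log b := Real.log_lt_log ha.1 hab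
    have hd : (0:ℝ) < 1 + d1 := by linarith
    nlinarith [mul_lt_mul_of_pos_left h1 hd, mul_lt_mul_of_pos_left h2' hd1]
  refine ⟨hanti, ?_, ?_, ?_⟩
  · -- tends to +∞ at 0⁺
    have h1 : Tendsto (fun u : ℝ => -(d1 * Real.log u)) (𝓝[>] 0) atTop := by
      have h := (Real.tendsto_log_nhdsGT_zero.const_mul_atBot hd1)
      exact tendsto_neg_atBot_atTop.comp h
    have h2' : Tendsto (fun u : ℝ => (1 + d1) * Real.log (1 - u)) (𝓝[>] 0)
        (𝓝 ((1 + d1) * Real.log (1 - 0))) := by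
      apply Tendsto.mono_left _ nhdsWithin_le_nhds
      exact (ContinuousAt.mul continuousAt_const
        ((Real.continuousAt_log (by norm_num)).comp (by fun_prop)))
    have hsum : Tendsto (fun u : ℝ => (1 + d1) * Real.log (1 - u) - d1 * Real.log u)
        (𝓝[>] 0) atTop := by
      simpa [sub_eq_add_neg] using h2'.add_atTop h1
    have : Tendsto (fun u : ℝ => Real.sqrt 2 *
        ((1 + d1) * Real.log (1 - u) - d1 * Real.log u)) (𝓝[>] 0) atTop :=
      hsum.const_mul_atTop h2
    exact this.congr fun u => (hψ u).symm
  · -- tends to -∞ at 1⁻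
    have hmap : Tendsto (fun u : ℝ => 1 - u) (𝓝[<] (1:ℝ)) (𝓝[>] 0) := by
      apply tendsto_nhdsWithin_of_tendsto_nhds_of_eventually_within
      · have hc : ContinuousAt (fun u : ℝ => 1 - u) 1 := by fun_prop
        have := hc.tendsto.mono_left (nhdsWithin_le_nhds (s := Set.Iio (1:ℝ)))
        simpa using this
      · filter_upwards [self_mem_nhdsWithin] with u hu
        simp only [Set.mem_Iio] at hu
        simpa using hu
    have h1 : Tendsto (fun u : ℝ => (1 + d1) * Real.log (1 - u)) (𝓝[<] (1:ℝ)) atBot := by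
      have := (Real.tendsto_log_nhdsGT_zero.comp hmap).const_mul_atBot
        (show (0:ℝ) < 1 + d1 by linarith)
      simpa [Function.comp] using this
    have h2' : Tendsto (fun u : ℝ => -(d1 * Real.log u)) (𝓝[<] (1:ℝ))
        (𝓝 (-(d1 * Real.log 1))) := by
      apply Tendsto.mono_left _ nhdsWithin_le_nhds
      exact (ContinuousAt.mul continuousAt_const (Real.continuousAt_log (by norm_num))).neg
    have hsum : Tendsto (fun u : ℝ => (1 + d1) * Real.log (1 - u) - d1 * Real.log u)
        (𝓝[<] (1:ℝ)) atBot := by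
      simpa [sub_eq_add_neg] using h1.atBot_add h2'
    have : Tendsto (fun u : ℝ => Real.sqrt 2 *
        ((1 + d1) * Real.log (1 - u) - d1 * Real.log u)) (𝓝[<] (1:ℝ)) atBot :=
      hsum.const_mul_atBot h2
    exact this.congr fun u => (hψ u).symm
  · -- derivative of the inverse
    intro U hmem hinv x
    have hinj : Set.InjOn ψ (Set.Ioo 0 1) := hanti.injOn
    have hsurj : ∀ u ∈ Set.Ioo (0:ℝ) 1, ∃ y, U y = u := fun u hu =>
      ⟨ψ u, hinj (hmem (ψ u)) hu (hinv (ψ u))⟩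
    have hUanti : StrictAnti U := by
      intro a b hab
      rcases lt_trichotomy (U a) (U b) with h | h | h
      · exfalso
        have := hanti (hmem a) (hmem b) h
        rw [hinv a, hinv b] at this; linarith
      · exfalso
        have : a = b := by rw [← hinv a, ← hinv b, h]
        linarith
      · exact h
    have hrange : Set.range U = Set.Ioo 0 1 := by
      apply Set.Subset.antisymm
      · rintro _ ⟨y, rfl⟩; exact hmem y
      · intro u hu; exact hsurj u hu
    have hUcont : ContinuousAt U x := by
      have hg : Monotone (fun y : ℝ => U (-y)) := by
        intro a b hab
        rcases eq_or_lt_of_le hab with rfl | h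
        · exact le_refl _
        · exact (hUanti (neg_lt_neg h)).le
      have hgim : (fun y : ℝ => U (-y)) '' Set.univ ∈ 𝓝 (U (-(-x))) := by
        have him : (fun y : ℝ => U (-y)) '' Set.univ = Set.Ioo 0 1 := by
          rw [← hrange]
          ext u
          constructor
          · rintro ⟨y, -, rfl⟩; exact ⟨-y, rfl⟩
          · rintro ⟨y, rfl⟩; exact ⟨-y, trivial, by simp⟩
        rw [him, neg_neg]
        exact isOpen_Ioo.mem_nhds (hmem x)
      have hgc : ContinuousAt (fun y : ℝ => U (-y)) (-x) :=
        continuousAt_of_monotoneOn_of_image_mem_nhds (fun a _ b _ h => hg h)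
          Filter.univ_mem hgim
      have : ContinuousAt (fun y : ℝ => U (-(-y))) x := hgc.comp continuousAt_neg
      simpa using this
    set u := U x with hu
    have hu0 : 0 < u := (hmem x).1
    have hu1 : u < 1 := (hmem x).2
    have h1u : (1:ℝ) - u ≠ 0 := by linarith
    have hder : HasDerivAt ψ
        (Real.sqrt 2 * ((1 + d1) * ((-1) / (1 - u)) - d1 * (1 / u))) u := by
      have hf1 : HasDerivAt (fun v : ℝ => Real.log (1 - v)) ((-1) / (1 - u)) u := by
        have := (((hasDerivAt_id u).const_sub 1).log h1u)
        simpa using this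
      have hf2 : HasDerivAt Real.log (1 / u) u := by
        simpa [one_div] using Real.hasDerivAt_log (ne_of_gt hu0)
      have H := (((hf1.const_mul (1 + d1)).sub (hf2.const_mul d1)).const_mul (Real.sqrt 2))
      exact H.congr_of_eventuallyEq (Filter.Eventually.of_forall fun v => hψ v)
    have hne : Real.sqrt 2 * ((1 + d1) * ((-1) / (1 - u)) - d1 * (1 / u)) ≠ 0 := by
      have hlt : (1 + d1) * ((-1) / (1 - u)) - d1 * (1 / u) < 0 := by
        have hpos1 : 0 < (1 + d1) / (1 - u) := by
          apply div_pos (by linarith) (by linarith)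
        have hpos2 : 0 < d1 / u := div_pos hd1 hu0
        have e1 : (1 + d1) * ((-1) / (1 - u)) = -((1 + d1) / (1 - u)) := by ring
        have e2 : d1 * (1 / u) = d1 / u := by ring
        rw [e1, e2]; linarith
      exact ne_of_lt (mul_neg_of_pos_of_neg h2 hlt)
    have key : HasDerivAt U
        (Real.sqrt 2 * ((1 + d1) * ((-1) / (1 - u)) - d1 * (1 / u)))⁻¹ x :=
      HasDerivAt.of_local_left_inverse hUcont hder hne
        (Filter.Eventually.of_forall hinv)
    convert key using 1
    have hdu : (0:ℝ) < d1 + u := by linarith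
    have hexp : Real.sqrt 2 * ((1 + d1) * ((-1) / (1 - u)) - d1 * (1 / u))
        = -(Real.sqrt 2 * (d1 + u)) / (u * (1 - u)) := by
      field_simp
      ring
    rw [hexp, inv_div, div_neg, ← neg_div]
end

section
/- Let U: ℝ → (0,1) solve U' = -U(1-U)/(√2(d1 + U)) with d1 > 0. Then U solves the traveling wave equation 0 = d1 U'' + c U' + (U U')' + U - U² with speed c = 1/√2 + √2 d1, and satisfies U(x) → 1 as x → -∞ and U(x) → 0 as x → +∞. -/
open Filter Set

noncomputable def Hfun (s d1 : ℝ) : ℝ → ℝ := fun u => -(u*(1-u)) / (s*(d1+u))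
noncomputable def Hdfun (s d1 : ℝ) : ℝ → ℝ :=
  fun u => ((2*u-1) * (s*(d1+u)) - -(u*(1-u)) * s) / (s*(d1+u))^2

lemma Hfun_hasDerivAt (s d1 u : ℝ) (h : s * (d1 + u) ≠ 0) :
    HasDerivAt (Hfun s d1) (Hdfun s d1 u) u := by
  have h1 : HasDerivAt (fun v : ℝ => -(v*(1-v))) (2*u-1) u := by
    have := (((hasDerivAt_id u).mul ((hasDerivAt_const u (1:ℝ)).sub (hasDerivAt_id u)))).neg
    exact this.congr_deriv (by simp; ring)
  have h2 : HasDerivAt (fun v : ℝ => s*(d1+v)) s u := by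
    have := ((hasDerivAt_const u d1).add (hasDerivAt_id u)).const_mul s
    exact this.congr_deriv (by simp)
  exact h1.div h2 h

lemma key_alg (s d1 u : ℝ) (hs : s ^ 2 = 2) (hs0 : s ≠ 0) (hden : d1 + u ≠ 0) :
    d1 * (Hdfun s d1 u * Hfun s d1 u) + (1/s + s*d1) * Hfun s d1 u
      + (Hfun s d1 u * Hfun s d1 u + u * (Hdfun s d1 u * Hfun s d1 u))
      + u - u ^ 2 = 0 := by
  have hA : s * (d1 + u) ≠ 0 := mul_ne_zero hs0 hden
  have factored : d1 * (Hdfun s d1 u * Hfun s d1 u) + (1/s + s*d1) * Hfun s d1 u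
      + (Hfun s d1 u * Hfun s d1 u + u * (Hdfun s d1 u * Hfun s d1 u))
      + u - u ^ 2 = (s^2 - 2) * (u^2*(1-u)) / (s^2*(d1+u)) := by
    unfold Hfun Hdfun
    field_simp
    ring
  rw [factored, hs]
  simp

/-- If U : ℝ → (0,1) solves U' = -U(1-U)/(√2(d1+U)) with d1 > 0, then U solves the
porous medium traveling wave equation 0 = d1 U'' + cU' + (UU')' + U - U² with
c = 1/√2 + √2 d1, and U → 1 at -∞, U → 0 at +∞. -/
theorem stmt_5 (d1 c : ℝ) (hd1 : 0 < d1) (hc : c = 1 / Real.sqrt 2 + Real.sqrt 2 * d1)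
    (U : ℝ → ℝ) (hrange : ∀ x, U x ∈ Set.Ioo (0:ℝ) 1)
    (hode : ∀ x, HasDerivAt U (-(U x * (1 - U x)) / (Real.sqrt 2 * (d1 + U x))) x) :
    (∀ x, d1 * deriv (deriv U) x + c * deriv U x +
        deriv (fun y => U y * deriv U y) x + U x - (U x) ^ 2 = 0) ∧
    Filter.Tendsto U Filter.atBot (nhds 1) ∧
    Filter.Tendsto U Filter.atTop (nhds 0) := by
  set s := Real.sqrt 2 with hsdef
  have hs : s ^ 2 = 2 := Real.sq_sqrt (by norm_num)
  have hs0 : (0:ℝ) < s := Real.sqrt_pos.2 (by norm_num)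
  have hdenpos : ∀ x, 0 < s * (d1 + U x) := fun x =>
    mul_pos hs0 (by have := (hrange x).1; linarith)
  have hode' : ∀ x, HasDerivAt U (Hfun s d1 (U x)) x := fun x => hode x
  have hDU : deriv U = fun x => Hfun s d1 (U x) := funext fun x => (hode' x).deriv
  have hdd : ∀ x, HasDerivAt (deriv U) (Hdfun s d1 (U x) * Hfun s d1 (U x)) x := fun x => by
    rw [hDU]
    exact (Hfun_hasDerivAt s d1 (U x) (hdenpos x).ne').comp x (hode' x)
  have hprod : ∀ x, HasDerivAt (fun y => U y * deriv U y)
      (Hfun s d1 (U x) * Hfun s d1 (U x) + U x * (Hdfun s d1 (U x) * Hfun s d1 (U x))) x := by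
    intro x
    simp only [hDU]
    exact (hode' x).mul ((Hfun_hasDerivAt s d1 (U x) (hdenpos x).ne').comp x (hode' x))
  have hanti : StrictAnti U := by
    apply strictAnti_of_deriv_neg
    intro x
    rw [(hode' x).deriv]
    unfold Hfun
    apply div_neg_of_neg_of_pos _ (hdenpos x)
    have := (hrange x).1; have := (hrange x).2
    nlinarith
  have hucont : Continuous U := by
    rw [continuous_iff_continuousAt]
    exact fun x => (hode' x).differentiableAt.continuousAt
  refine ⟨fun x => ?_, ?_, ?_⟩
  · rw [(hdd x).deriv, (hprod x).deriv, (hode' x).deriv, hc]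
    have hne : d1 + U x ≠ 0 := by have := (hrange x).1; positivity
    exact key_alg s d1 (U x) hs hs0.ne' hne
  · -- U → 1 at -∞
    have hM : Tendsto U atBot (nhds (⨆ x, U x)) :=
      tendsto_atBot_ciSup hanti.antitone ⟨1, fun y ⟨x, hx⟩ => hx ▸ (hrange x).2.le⟩
    have hMle : (⨆ x, U x) ≤ 1 := ciSup_le fun x => (hrange x).2.le
    have hMeq : (⨆ x, U x) = 1 := by
      by_contra hne
      have hMlt : (⨆ x, U x) < 1 := lt_of_le_of_ne hMle hne
      set M := ⨆ x, U x with hMdef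
      have hUleM : ∀ x, U x ≤ M := fun x =>
        le_ciSup ⟨1, fun y ⟨z, hz⟩ => hz ▸ (hrange z).2.le⟩ x
      set δ := U 0 * (1 - M) / (s * (d1 + 1)) with hδdef
      have hδpos : 0 < δ := by
        have := (hrange 0).1
        apply div_pos (by nlinarith) (by positivity)
      have hbound : ∀ x ∈ interior (Iic (0:ℝ)),
          deriv (fun y => U y + δ * y) x ≤ 0 := by
        intro x hx
        rw [interior_Iic] at hx
        have hVd : HasDerivAt (fun y => U y + δ * y) (Hfun s d1 (U x) + δ) x := by
          simpa using (hode' x).fun_add ((hasDerivAt_id x).const_mul δ)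
        rw [hVd.deriv]
        have h1 : U 0 ≤ U x := hanti.antitone (le_of_lt hx)
        have h2 : U x ≤ M := hUleM x
        have hq : δ ≤ U x * (1 - U x) / (s * (d1 + U x)) := by
          apply div_le_div₀ (by nlinarith [(hrange x).1, (hrange x).2])
            (by nlinarith [(hrange 0).1, (hrange x).2]) (hdenpos x)
          have : U x ≤ 1 := (hrange x).2.le
          nlinarith
        have : Hfun s d1 (U x) = -(U x * (1 - U x) / (s * (d1 + U x))) := by
          unfold Hfun; ring
        rw [this]; linarith
      have hVanti : AntitoneOn (fun y => U y + δ * y) (Iic 0) :=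
        antitoneOn_of_deriv_nonpos (convex_Iic 0)
          (Continuous.continuousOn (by continuity)) (fun x _ => by
            have hVd : HasDerivAt (fun y => U y + δ * y) (Hfun s d1 (U x) + δ) x := by
              simpa using (hode' x).fun_add ((hasDerivAt_id x).const_mul δ)
            exact hVd.differentiableAt.differentiableWithinAt) hbound
      have hx0 : (-(1/δ) : ℝ) ∈ Iic (0:ℝ) := by
        simp; positivity
      have := hVanti hx0 (self_mem_Iic) (by simpa using le_of_lt (by positivity : (0:ℝ) < 1/δ))
      simp only at this
      have hδx : δ * (-(1/δ)) = -1 := by field_simp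
      have : U (-(1/δ)) ≥ U 0 + 1 := by rw [hδx] at this; linarith
      have := (hrange (-(1/δ))).2
      have := (hrange 0).1
      linarith
    rw [← hMeq]; exact hM
  · -- U → 0 at +∞
    have hL : Tendsto U atTop (nhds (⨅ x, U x)) :=
      tendsto_atTop_ciInf hanti.antitone ⟨0, fun y ⟨x, hx⟩ => hx ▸ (hrange x).1.le⟩
    have hLge : 0 ≤ (⨅ x, U x) := le_ciInf fun x => (hrange x).1.le
    have hLeq : (⨅ x, U x) = 0 := by
      by_contra hne
      have hLpos : 0 < (⨅ x, U x) := lt_of_le_of_ne hLge (Ne.symm hne)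
      set L := ⨅ x, U x with hLdef
      have hUgeL : ∀ x, L ≤ U x := fun x =>
        ciInf_le ⟨0, fun y ⟨z, hz⟩ => hz ▸ (hrange z).1.le⟩ x
      set δ := L * (1 - U 0) / (s * (d1 + 1)) with hδdef
      have hδpos : 0 < δ := by
        have := (hrange 0).2
        apply div_pos (by nlinarith) (by positivity)
      have hbound : ∀ x ∈ interior (Ici (0:ℝ)),
          deriv (fun y => U y + δ * y) x ≤ 0 := by
        intro x hx
        rw [interior_Ici] at hx
        have hVd : HasDerivAt (fun y => U y + δ * y) (Hfun s d1 (U x) + δ) x := by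
          simpa using (hode' x).fun_add ((hasDerivAt_id x).const_mul δ)
        rw [hVd.deriv]
        have h1 : U x ≤ U 0 := hanti.antitone (le_of_lt hx)
        have h2 : L ≤ U x := hUgeL x
        have hq : δ ≤ U x * (1 - U x) / (s * (d1 + U x)) := by
          apply div_le_div₀ (by nlinarith [(hrange x).1, (hrange x).2])
            (by nlinarith [(hrange 0).2, (hrange x).1]) (hdenpos x)
          have : U x ≤ 1 := (hrange x).2.le
          nlinarith
        have : Hfun s d1 (U x) = -(U x * (1 - U x) / (s * (d1 + U x))) := by
          unfold Hfun; ring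
        rw [this]; linarith
      have hVanti : AntitoneOn (fun y => U y + δ * y) (Ici 0) :=
        antitoneOn_of_deriv_nonpos (convex_Ici 0)
          (Continuous.continuousOn (by continuity)) (fun x _ => by
            have hVd : HasDerivAt (fun y => U y + δ * y) (Hfun s d1 (U x) + δ) x := by
              simpa using (hode' x).fun_add ((hasDerivAt_id x).const_mul δ)
            exact hVd.differentiableAt.differentiableWithinAt) hbound
      have h00 : 0 < U 0 := (hrange 0).1
      have hx0 : (U 0 / δ : ℝ) ∈ Ici (0:ℝ) := by
        simp only [mem_Ici]; positivity
      have := hVanti (self_mem_Ici) hx0 (by positivity)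
      simp only at this
      have hδx : δ * (U 0 / δ) = U 0 := by field_simp
      have : U (U 0 / δ) ≤ 0 := by rw [hδx] at this; linarith
      have := (hrange (U 0 / δ)).1
      linarith
    rw [← hLeq]; exact hL
end

section
/- In the Nagumo traveling wave system Ũ' = W̃, W̃' = -c W̃ - Ũ(1 - Ũ)(d1 + Ũ), the quadratic curve W̃ = -α Ũ(1 - Ũ) is invariant under the flow if and only if α = 1/√2 and c = 1/√2 + √2 d1 (assuming α > 0 and d1 > 0). -/
/-- In the Nagumo system Ũ' = W̃, W̃' = -cW̃ - Ũ(1-Ũ)(d1+Ũ), the quadratic curve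
W̃ = -αŨ(1-Ũ) is invariant under the flow (for α > 0, d1 > 0) iff
α = 1/√2 and c = 1/√2 + √2 d1. -/
theorem stmt_6 (d1 α c : ℝ) (hd1 : 0 < d1) (hα : 0 < α) :
    (∀ U ∈ Set.Ioo (0:ℝ) 1,
        -c * (-α * U * (1 - U)) - U * (1 - U) * (d1 + U)
          = (-α * (1 - 2 * U)) * (-α * U * (1 - U))) ↔
    (α = 1 / Real.sqrt 2 ∧ c = 1 / Real.sqrt 2 + Real.sqrt 2 * d1) := by
  have hs2 : Real.sqrt 2 > 0 := by positivity
  have hsq : Real.sqrt 2 * Real.sqrt 2 = 2 := Real.mul_self_sqrt (by norm_num)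
  constructor
  · intro h
    have h1 := h (1/2) (by norm_num)
    have h2 := h (1/4) (by norm_num)
    have hα2 : α ^ 2 = 1 / 2 := by nlinarith
    have hαs : α = 1 / Real.sqrt 2 := by
      have : (α - 1 / Real.sqrt 2) * (α + 1 / Real.sqrt 2) = 0 := by
        field_simp
        nlinarith
      rcases mul_eq_zero.mp this with h' | h'
      · linarith
      · nlinarith [one_div_pos.mpr hs2]
    refine ⟨hαs, ?_⟩
    have hc : c * α = d1 + α ^ 2 := by nlinarith
    rw [hαs] at hc
    field_simp at hc ⊢
    nlinarith
  · rintro ⟨ha, hc⟩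
    intro U hU
    subst ha hc
    field_simp
    ring_nf
    have hsq2 : Real.sqrt 2 ^ 2 = 2 := by rw [sq]; exact hsq
    rw [hsq2]
    ring
end

section
/- Fix d1 > 0, δ1 > 0, 0 ≤ U2 ≤ 1, and θ ∈ ℝ with |θ| < 3π/4. Then the characteristic equation det(M - ν² I) = 0, where M is the 2×2 matrix with entries M11 = (δ1²/d1) e^{iθ}, M12 = -(δ1^{3/2}/d1) U2, M21 = -e^{iθ} δ1^{1/2}/d1, M22 = 1 + U2/d1, has no purely imaginary root ν = ik with k ∈ ℝ. -/
set_option maxHeartbeats 1000000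


/-- For d1 > 0, δ1 > 0, 0 ≤ U2 ≤ 1, |θ| < 3π/4, the characteristic equation
det(M - ν²I) = 0 with M11 = (δ1²/d1)e^{iθ}, M12 = -(δ1^{3/2}/d1)U2,
M21 = -e^{iθ}δ1^{1/2}/d1, M22 = 1 + U2/d1, has no purely imaginary root ν = ik. -/
theorem stmt_12 (d1 δ1 U2 θ : ℝ) (hd1 : 0 < d1) (hδ1 : 0 < δ1)
    (hU2 : 0 ≤ U2 ∧ U2 ≤ 1) (hθ : |θ| < 3 * Real.pi / 4)
    (M : Matrix (Fin 2) (Fin 2) ℂ)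
    (hM : M = !![((δ1 ^ 2 / d1 : ℝ) : ℂ) * Complex.exp (θ * Complex.I),
                 ((-(δ1 ^ ((3:ℝ)/2) / d1) * U2 : ℝ) : ℂ);
                 -Complex.exp (θ * Complex.I) * ((δ1 ^ ((1:ℝ)/2) / d1 : ℝ) : ℂ),
                 ((1 + U2 / d1 : ℝ) : ℂ)]) :
    ∀ k : ℝ, (M - ((Complex.I * (k : ℂ)) ^ 2) • (1 : Matrix (Fin 2) (Fin 2) ℂ)).det ≠ 0 := by
  intro k h
  subst hM
  simp [Matrix.det_fin_two, Matrix.smul_apply, Matrix.one_apply] at h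
  rw [Complex.exp_mul_I, Complex.ext_iff] at h
  simp [Complex.add_re, Complex.add_im, Complex.mul_re, Complex.mul_im, mul_pow,
    Complex.I_sq, Complex.cos_ofReal_re, Complex.sin_ofReal_re, ← Complex.ofReal_pow,
    Complex.ofReal_re, Complex.ofReal_im] at h
  obtain ⟨h1, h2⟩ := h
  have hE : δ1 ^ ((3:ℝ)/2) * δ1 ^ ((2:ℝ))⁻¹ = δ1 ^ 2 := by
    rw [← Real.rpow_natCast δ1 2, ← Real.rpow_add hδ1]; norm_num
  have hd2 : (0:ℝ) < d1 ^ 2 := by have hu := hU2.1; positivity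
  have hC : 0 < δ1^2/d1*(1+U2/d1+k^2) - δ1^2*U2/d1^2 := by
    have e : δ1^2/d1*(1+U2/d1+k^2) - δ1^2*U2/d1^2 = δ1^2*(1+k^2)/d1 := by
      field_simp; ring
    rw [e]; positivity
  have hs : Real.sin θ = 0 := by
    have h2' : Real.sin θ * (δ1^2/d1*(1+U2/d1+k^2) - δ1^2*U2/d1^2) = 0 := by
      linear_combination h2 + (Real.sin θ * U2 / d1^2) * hE
    exact (mul_eq_zero.mp h2').resolve_right (ne_of_gt hC)
  have hθ0 : θ = 0 := by
    rcases Real.sin_eq_zero_iff.mp hs with ⟨n, hn⟩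
    by_contra hne
    have hn0 : n ≠ 0 := by
      rintro rfl; simp at hn; exact hne hn.symm
    have h1n : (1:ℝ) ≤ |(n:ℝ)| := by
      have := Int.one_le_abs hn0
      calc (1:ℝ) = ((1:ℤ):ℝ) := by norm_num
        _ ≤ ((|n|:ℤ):ℝ) := by exact_mod_cast this
        _ = |(n:ℝ)| := by push_cast; ring
    have hp : Real.pi ≤ |θ| := by
      rw [← hn, abs_mul, abs_of_pos Real.pi_pos]
      nlinarith [Real.pi_pos]
    linarith [Real.pi_pos]
  subst hθ0
  simp [Real.cos_zero] at h1
  have key : (δ1^2/d1 + k^2)*(1+U2/d1+k^2) - δ1^2*U2/d1^2 = 0 := by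
    linear_combination h1 + (U2/d1^2) * hE
  have hpos : 0 < (δ1^2/d1 + k^2)*(1+U2/d1+k^2) - δ1^2*U2/d1^2 := by
    have e : (δ1^2/d1 + k^2)*(1+U2/d1+k^2) - δ1^2*U2/d1^2
        = δ1^2*(1+k^2)/d1 + k^2*(1+U2/d1+k^2) := by field_simp; ring
    rw [e]
    have : (0:ℝ) < δ1^2*(1+k^2)/d1 := by have hu := hU2.1; positivity
    have h2' : (0:ℝ) ≤ k^2*(1+U2/d1+k^2) := by have hu := hU2.1; positivity
    linarith
  linarith
end

section
/- For d1 > 0, let u(x) be the function with inverse ψ(u) = √2((1+d1) log(1-u) - d1 log(u)), and let φ(x) = ρ(x)² u'(x)/(d1 + u(x)) with ρ(x) = exp(-m(x)), m(x) = -∫_{x0}^x (2u'(s) + c)/(2(d1 + u(s))) ds, c = 1/√2 + √2 d1, and x0 = ψ(1/2). Then ⟨u', φ⟩_{L²(ℝ)} = 4√2 π d1 (d1+1) csc(2π d1)/(6d1 + 3), for 0 < d1 < 1/2. -/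
open MeasureTheory intervalIntegral in
lemma real_beta_aux {a b : ℝ} (ha : 0 < a) (hb : 0 < b) :
    ∫ v in (0:ℝ)..1, v ^ (a-1) * (1-v) ^ (b-1)
      = Real.Gamma a * Real.Gamma b / Real.Gamma (a+b) := by
  have h := Complex.Gamma_mul_Gamma_eq_betaIntegral (s := a) (t := b) (by simpa) (by simpa)
  have hβ : Complex.betaIntegral a b
      = ((∫ v in (0:ℝ)..1, v ^ (a-1) * (1-v) ^ (b-1) : ℝ) : ℂ) := by
    rw [Complex.betaIntegral, ← intervalIntegral.integral_ofReal]
    refine intervalIntegral.integral_congr fun x hx => ?_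
    rw [Set.uIcc_of_le (by norm_num)] at hx
    have e1 : ((a:ℂ) - 1) = ((a - 1 : ℝ) : ℂ) := by push_cast; ring
    have e2 : ((b:ℂ) - 1) = ((b - 1 : ℝ) : ℂ) := by push_cast; ring
    have e3 : (1 - (x:ℂ)) = ((1 - x : ℝ) : ℂ) := by push_cast; ring
    rw [e1, e2, e3, ← Complex.ofReal_cpow hx.1, ← Complex.ofReal_cpow (by linarith [hx.2] : (0:ℝ) ≤ 1 - x), ← Complex.ofReal_mul]
  rw [hβ, ← Complex.ofReal_add, Complex.Gamma_ofReal, Complex.Gamma_ofReal,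
    Complex.Gamma_ofReal, ← Complex.ofReal_mul, ← Complex.ofReal_mul] at h
  have := Complex.ofReal_injective h
  have hG : Real.Gamma (a+b) ≠ 0 := (Real.Gamma_pos_of_pos (by linarith)).ne'
  field_simp
  linarith [this]

/-- Explicit cokernel pairing for the pushed porous medium front: with u defined
through its inverse ψ(u) = √2((1+d1)log(1-u) - d1 log u), speed c = 1/√2 + √2 d1,
weight ρ = e^{-m}, m(x) = -∫_{x0}^x (2u'+c)/(2(d1+u)), x0 = ψ(1/2), and
φ = ρ² u'/(d1+u), one has ⟨u', φ⟩ = 4√2 π d1(d1+1) csc(2πd1)/(6d1+3) for 0 < d1 < 1/2. -/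
theorem stmt_16 (d1 : ℝ) (hd1 : 0 < d1) (hd1' : d1 < 1 / 2)
    (c : ℝ) (hc : c = 1 / Real.sqrt 2 + Real.sqrt 2 * d1)
    (ψ : ℝ → ℝ)
    (hψ : ∀ u, ψ u = Real.sqrt 2 * ((1 + d1) * Real.log (1 - u) - d1 * Real.log u))
    (u : ℝ → ℝ) (hrange : ∀ x, u x ∈ Set.Ioo (0:ℝ) 1) (hinv : ∀ x, ψ (u x) = x)
    (x0 : ℝ) (hx0 : x0 = ψ (1 / 2))
    (m ρ φ : ℝ → ℝ)
    (hm : ∀ x, m x = -∫ s in x0..x, (2 * deriv u s + c) / (2 * (d1 + u s)))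
    (hρ : ∀ x, ρ x = Real.exp (-m x))
    (hφ : ∀ x, φ x = ρ x ^ 2 * deriv u x / (d1 + u x)) :
    (∫ x, deriv u x * φ x)
      = 4 * Real.sqrt 2 * Real.pi * d1 * (d1 + 1) * (1 / Real.sin (2 * Real.pi * d1))
          / (6 * d1 + 3) := by
  have s2 : (0:ℝ) < Real.sqrt 2 := by positivity
  have s2sq : Real.sqrt 2 * Real.sqrt 2 = 2 := Real.mul_self_sqrt (by norm_num)
  -- derivative of ψ
  set ψ' : ℝ → ℝ := fun v => -(Real.sqrt 2 * (d1 + v)) / (v * (1 - v)) with hψ'def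
  have hψd : ∀ v ∈ Set.Ioo (0:ℝ) 1, HasDerivAt ψ (ψ' v) v := by
    intro v hv
    obtain ⟨hv0, hv1⟩ := hv
    have h1v : (0:ℝ) < 1 - v := by linarith
    have hlog1 : HasDerivAt (fun w : ℝ => Real.log (1 - w)) (-(1-v)⁻¹) v := by
      have := (Real.hasDerivAt_log h1v.ne').comp v ((hasDerivAt_id v).const_sub 1)
      simpa [Function.comp_def] using this
    have hlog2 : HasDerivAt Real.log v⁻¹ v := Real.hasDerivAt_log hv0.ne'
    have h := (((hlog1.const_mul (1 + d1)).sub (hlog2.const_mul d1)).const_mul (Real.sqrt 2))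
    have heq : (fun w => Real.sqrt 2 * ((1 + d1) * Real.log (1 - w) - d1 * Real.log w)) = ψ := by
      funext w; rw [hψ w]
    simp only [Pi.sub_apply] at h
    rw [heq] at h
    refine h.congr_deriv (Eq.symm ?_)
    rw [hψ'def]
    field_simp
    ring
  -- strict antitonicity and inverse facts
  have hψ'neg : ∀ v ∈ Set.Ioo (0:ℝ) 1, ψ' v < 0 := by
    intro v hv
    have h1 : (0:ℝ) < v * (1 - v) := mul_pos hv.1 (by linarith [hv.2])
    have h2 : (0:ℝ) < Real.sqrt 2 * (d1 + v) := mul_pos s2 (by linarith [hv.1])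
    rw [hψ'def]
    simp only [neg_div]
    exact neg_neg_of_pos (div_pos h2 h1)
  have hanti : StrictAntiOn ψ (Set.Ioo 0 1) := by
    apply strictAntiOn_of_deriv_neg (convex_Ioo 0 1)
    · exact fun v hv => (hψd v hv).continuousAt.continuousWithinAt
    · intro v hv
      rw [interior_Ioo] at hv
      rw [(hψd v hv).deriv]
      exact hψ'neg v hv
  have huv : ∀ v ∈ Set.Ioo (0:ℝ) 1, u (ψ v) = v := by
    intro v hv
    exact hanti.injOn (hrange (ψ v)) hv (hinv (ψ v))
  have hux0 : u x0 = 1/2 := by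
    rw [hx0]; exact huv (1/2) (by norm_num)
  -- u is strictly antitone and continuous
  have huanti : StrictAnti u := by
    intro x y hxy
    by_contra h
    push_neg at h
    rcases eq_or_lt_of_le h with h | h
    · rw [← hinv x, ← hinv y, h] at hxy; exact lt_irrefl _ hxy
    · have := hanti (hrange x) (hrange y) h
      rw [hinv x, hinv y] at this; linarith
  have hucont : Continuous u := by
    have hmono : StrictMonoOn (fun x => -u x) Set.univ := fun x _ y _ hxy =>
      neg_lt_neg (huanti hxy)
    have himgu : (fun x => -u x) '' Set.univ = Set.Ioo (-1 : ℝ) 0 := by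
      ext t
      simp only [Set.image_univ, Set.mem_range, Set.mem_Ioo]
      constructor
      · rintro ⟨x, rfl⟩
        exact ⟨by linarith [(hrange x).2], by linarith [(hrange x).1]⟩
      · rintro ⟨h1, h2⟩
        exact ⟨ψ (-t), by rw [huv (-t) ⟨by linarith, by linarith⟩]; ring⟩
    rw [continuous_iff_continuousAt]
    intro a
    have : ContinuousAt (fun x => -u x) a := by
      apply hmono.continuousAt_of_image_mem_nhds (Filter.univ_mem)
      rw [himgu]
      exact isOpen_Ioo.mem_nhds ⟨by linarith [(hrange a).2], by linarith [(hrange a).1]⟩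
    have := this.neg
    simpa only [Pi.neg_def, neg_neg] using this
  -- derivative of u
  have hu' : ∀ x, HasDerivAt u (-(u x * (1 - u x)) / (Real.sqrt 2 * (d1 + u x))) x := by
    intro x
    have hx := hrange x
    have h0 : ψ' (u x) ≠ 0 := by
      have h1 : (0:ℝ) < u x * (1 - u x) := mul_pos hx.1 (by linarith [hx.2])
      have h2 : (0:ℝ) < Real.sqrt 2 * (d1 + u x) := mul_pos s2 (by linarith [hx.1])
      rw [hψ'def]
      simp only [neg_div, ne_eq, neg_eq_zero]
      exact (div_pos h2 h1).ne'
    have := HasDerivAt.of_local_left_inverse hucont.continuousAt (hψd (u x) hx) h0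
      (Filter.Eventually.of_forall hinv)
    convert this using 1
    · rfl
    rw [hψ'def]
    simp only [inv_div]
    rw [div_neg, ← neg_div]
  have hderiv : ∀ x, deriv u x = -(u x * (1 - u x)) / (Real.sqrt 2 * (d1 + u x)) :=
    fun x => (hu' x).deriv
  -- M: antiderivative of the m-integrand
  set M : ℝ → ℝ := fun x => Real.log (d1 + u x)
      - ((1 + 2*d1)/2) * (Real.log (u x) - Real.log (1 - u x)) with hMdef
  have hc2 : Real.sqrt 2 * c = 1 + 2 * d1 := by
    rw [hc, mul_add, mul_one_div, div_self s2.ne', ← mul_assoc, s2sq]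
  have hM : ∀ x, HasDerivAt M ((2 * deriv u x + c) / (2 * (d1 + u x))) x := by
    intro x
    obtain ⟨hx0', hx1'⟩ := hrange x
    have hd1u : (0:ℝ) < d1 + u x := by linarith
    have h1u : (0:ℝ) < 1 - u x := by linarith
    set D := -(u x * (1 - u x)) / (Real.sqrt 2 * (d1 + u x)) with hD
    have hL3 : HasDerivAt (fun y => Real.log (d1 + u y)) ((d1 + u x)⁻¹ * D) x :=
      by have h := (Real.hasDerivAt_log hd1u.ne').comp x ((hu' x).const_add d1); exact h
    have hL1 : HasDerivAt (fun y => Real.log (u y)) ((u x)⁻¹ * D) x :=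
      (Real.hasDerivAt_log hx0'.ne').comp x (hu' x)
    have hL2 : HasDerivAt (fun y => Real.log (1 - u y)) ((1 - u x)⁻¹ * -D) x := by
      have := (Real.hasDerivAt_log h1u.ne').comp x ((hu' x).const_sub 1)
      simpa [Function.comp_def] using this
    have h := hL3.sub (((hL1.sub hL2).const_mul ((1 + 2*d1)/2)))
    rw [hMdef]
    refine h.congr_deriv (Eq.symm ?_)
    rw [hderiv x, ← hD]
    have e2 : D / (u x * (1 - u x)) = -(1/(Real.sqrt 2 * (d1 + u x))) := by
      rw [hD]
      field_simp
    have e1 : (d1 + u x)⁻¹ * D - (1 + 2*d1)/2 * ((u x)⁻¹ * D - (1 - u x)⁻¹ * -D)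
        = D/(d1 + u x) - (1 + 2*d1)/2 * (D / (u x * (1 - u x))) := by
      field_simp [hx0'.ne', h1u.ne', hd1u.ne']
      ring
    rw [e1, e2]
    have e3 : (1 + 2*d1)/2 * (1/(Real.sqrt 2 * (d1 + u x))) = c / (2*(d1 + u x)) := by
      rw [mul_one_div, div_eq_div_iff (mul_pos s2 hd1u).ne' (by positivity : (2:ℝ)*(d1+u x) ≠ 0)]
      linear_combination (-(d1 + u x)) * hc2
    rw [mul_neg, sub_neg_eq_add, e3]
    field_simp [hd1u.ne']
  have hcd : Continuous (deriv u) := by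
    have : deriv u = fun x => -(u x * (1 - u x)) / (Real.sqrt 2 * (d1 + u x)) :=
      funext hderiv
    rw [this]
    exact ((hucont.mul (continuous_const.sub hucont)).neg).div
      (continuous_const.mul (continuous_const.add hucont))
      (fun x => (mul_pos s2 (by linarith [(hrange x).1])).ne')
  have hcontf : Continuous fun s => (2 * deriv u s + c) / (2 * (d1 + u s)) :=
    ((continuous_const.mul hcd).add continuous_const).div
      (continuous_const.mul (continuous_const.add hucont))
      (fun x => by have := (hrange x).1; positivity)
  have hmM : ∀ x, m x = M x0 - M x := by
    intro x
    rw [hm x, intervalIntegral.integral_eq_sub_of_hasDerivAt (fun t _ => hM t)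
      (hcontf.intervalIntegrable x0 x)]
    ring
  have hMx0 : M x0 = Real.log (d1 + 1/2) := by
    rw [hMdef]; simp only [hux0]; norm_num
  -- pointwise form of the integrand
  set H : ℝ → ℝ := fun v => Real.exp (2 * ((Real.log (d1 + v)
      - ((1 + 2*d1)/2) * (Real.log v - Real.log (1 - v))) - Real.log (d1 + 1/2)))
      * (-(v * (1 - v)) / (Real.sqrt 2 * (d1 + v)))^2 / (d1 + v) with hHdef
  have hexp2 : ∀ t : ℝ, Real.exp t ^ 2 = Real.exp (2*t) := fun t => by
    rw [sq, ← Real.exp_add, two_mul]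
  have hpt : ∀ x, deriv u x * φ x = H (u x) := by
    intro x
    have hMx : M x = Real.log (d1 + u x)
        - ((1 + 2*d1)/2) * (Real.log (u x) - Real.log (1 - u x)) := rfl
    rw [hφ x, hρ x, hmM x, hHdef]
    simp only []
    rw [← hMx, ← hMx0, ← hderiv x, hexp2, neg_sub]
    ring
  -- change of variables
  have himg : ψ '' Set.Ioo 0 1 = Set.univ := by
    apply Set.eq_univ_of_forall
    intro x
    exact ⟨u x, hrange x, hinv x⟩
  have hcov : (∫ x, H (u x)) = ∫ v in Set.Ioo (0:ℝ) 1, |ψ' v| * H v := by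
    have h := MeasureTheory.integral_image_eq_integral_abs_deriv_smul measurableSet_Ioo
      (fun v hv => (hψd v hv).hasDerivWithinAt) hanti.injOn (fun x => H (u x))
    rw [himg, MeasureTheory.setIntegral_univ] at h
    rw [h]
    apply MeasureTheory.setIntegral_congr_fun measurableSet_Ioo
    intro v hv
    simp only [huv v hv, smul_eq_mul]
  -- the pointwise identity in v
  have hptv : ∀ v ∈ Set.Ioo (0:ℝ) 1, |ψ' v| * H v
      = (Real.sqrt 2 / (2 * (d1 + 1/2)^2))
        * (v ^ ((1 - 2*d1) - 1) * (1 - v) ^ ((3 + 2*d1) - 1)) := by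
    intro v hv
    obtain ⟨hv0, hv1⟩ := hv
    have h1v : (0:ℝ) < 1 - v := by linarith
    have hdv : (0:ℝ) < d1 + v := by linarith
    have hd12 : (0:ℝ) < d1 + 1/2 := by linarith
    have habs : |ψ' v| = Real.sqrt 2 * (d1 + v) / (v * (1 - v)) := by
      rw [abs_of_neg (hψ'neg v ⟨hv0, hv1⟩), hψ'def]
      simp [neg_div]
    rw [habs, hHdef]
    simp only []
    rw [Real.rpow_def_of_pos hv0, Real.rpow_def_of_pos h1v]
    set l1 := Real.log v with hl1
    set l2 := Real.log (1 - v) with hl2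
    set l3 := Real.log (d1 + v) with hl3
    set l4 := Real.log (d1 + 1/2) with hl4
    rw [show (1:ℝ) - v = Real.exp l2 from (Real.exp_log h1v).symm,
        show d1 + v = Real.exp l3 from (Real.exp_log hdv).symm,
        show d1 + 1/2 = Real.exp l4 from (Real.exp_log hd12).symm,
        show v = Real.exp l1 from (Real.exp_log hv0).symm]
    rw [neg_div, neg_sq, div_pow, mul_pow, mul_pow,
        show Real.sqrt 2 ^ 2 = (2:ℝ) from Real.sq_sqrt (by norm_num)]
    simp only [hexp2]
    field_simp [Real.exp_ne_zero]
    simp only [← Real.exp_add]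
    congr 1
    ring
  -- assemble
  have ha : (0:ℝ) < 1 - 2*d1 := by linarith
  have hb : (0:ℝ) < 3 + 2*d1 := by linarith
  have hsin : 0 < Real.sin (2 * Real.pi * d1) := by
    apply Real.sin_pos_of_pos_of_lt_pi
    · positivity
    · nlinarith [Real.pi_pos]
  have hG4 : Real.Gamma ((1 - 2*d1) + (3 + 2*d1)) = 6 := by
    rw [show (1 - 2*d1) + (3 + 2*d1) = ((3:ℕ):ℝ)+1 by push_cast; ring,
      Real.Gamma_nat_eq_factorial]
    norm_num [Nat.factorial]
  have hGb : Real.Gamma (3 + 2*d1)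
      = (2 + 2*d1) * ((1 + 2*d1) * ((2*d1) * Real.Gamma (2*d1))) := by
    rw [show (3 + 2*d1 : ℝ) = (2 + 2*d1) + 1 by ring, Real.Gamma_add_one (by positivity),
        show (2 + 2*d1 : ℝ) = (1 + 2*d1) + 1 by ring, Real.Gamma_add_one (by positivity),
        show (1 + 2*d1 : ℝ) = (2*d1) + 1 by ring, Real.Gamma_add_one (by positivity)]
  have key : Real.Gamma (1 - 2*d1) * Real.Gamma (2*d1)
      = Real.pi / Real.sin (2 * Real.pi * d1) := by
    rw [mul_comm, Real.Gamma_mul_Gamma_one_sub,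
      show Real.pi * (2*d1) = 2 * Real.pi * d1 by ring]
  calc (∫ x, deriv u x * φ x) = ∫ x, H (u x) := by simp only [hpt]
    _ = ∫ v in Set.Ioo (0:ℝ) 1, |ψ' v| * H v := hcov
    _ = ∫ v in Set.Ioo (0:ℝ) 1, (Real.sqrt 2 / (2 * (d1 + 1/2)^2))
          * (v ^ ((1 - 2*d1) - 1) * (1 - v) ^ ((3 + 2*d1) - 1)) :=
        MeasureTheory.setIntegral_congr_fun measurableSet_Ioo hptv
    _ = (Real.sqrt 2 / (2 * (d1 + 1/2)^2))
          * ∫ v in (0:ℝ)..1, v ^ ((1 - 2*d1) - 1) * (1 - v) ^ ((3 + 2*d1) - 1) := by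
        rw [intervalIntegral.integral_of_le (by norm_num : (0:ℝ) ≤ 1),
          ← MeasureTheory.integral_Ioc_eq_integral_Ioo, MeasureTheory.integral_const_mul]
    _ = 4 * Real.sqrt 2 * Real.pi * d1 * (d1 + 1) * (1 / Real.sin (2 * Real.pi * d1))
          / (6 * d1 + 3) := by
        rw [real_beta_aux ha hb, hG4, hGb,
          show Real.sqrt 2 / (2 * (d1 + 1/2)^2) * (Real.Gamma (1 - 2*d1)
            * ((2 + 2*d1) * ((1 + 2*d1) * ((2*d1) * Real.Gamma (2*d1)))) / 6)
          = (Real.sqrt 2 * (2 + 2*d1) * (1 + 2*d1) * (2*d1) / 6 / (2 * (d1 + 1/2)^2))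
            * (Real.Gamma (1 - 2*d1) * Real.Gamma (2*d1)) from by ring, key]
        rw [div_div, div_mul_div_comm, mul_one_div, div_div,
          div_eq_div_iff (mul_pos (by positivity : (0:ℝ) < 6*(2*(d1+1/2)^2)) hsin).ne'
            (mul_pos hsin (by positivity : (0:ℝ) < 6*d1+3)).ne']
        ring
end
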